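/- arXiv:1302.1974 — 2 statements merged into one kernel-verified Lean document; each statement's English description precedes it below -/
import Mathlib

section
/- (Paper's Lemma 3.) Let ε ≥ 0, c ≥ 0 and δ ∈ ℝ. Let K₀ := {y ∈ ℝ^M : 𝐀y = e, 𝐂y ≤ d}, let y* ∈ K₀ satisfy ½(y*)ᵀHy* ≤ ½yᵀHy for all y ∈ K₀, and let ŷ ∈ K₀. If λ ∈ ℝ^p and μ ∈ ℝ^q with μ ≥ 0 satisfy D^δ(λ,μ) ≥ ½ŷᵀHŷ − ε·c, then ½(ŷ − y*)ᵀH(ŷ − y*) ≤ ε·c + δ·μᵀd. -/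
/-!
Weak duality: completing the square in the Lagrangian, and using `μ ≥ 0` with `𝐂y* ≤ d`, bounds
`D^δ(λ,μ)` above by `½y*ᵀHy* + δ·μᵀd`. First-order optimality of `y*` on the convex set `K₀` gives
`y*ᵀH(ŷ − y*) ≥ 0`, hence `½ŷᵀHŷ ≥ ½y*ᵀHy* + ½(ŷ − y*)ᵀH(ŷ − y*)`. Chaining these with the
assumed lower bound on `D^δ(λ,μ)` gives the claim.
-/

open Matrix

/-- The dual function of the tightened quadratic program
`min {½yᵀHy : 𝐀y = e, 𝐂y ≤ (1−δ)d}`. -/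
noncomputable def dualFn {M p q : ℕ} (H : Matrix (Fin M) (Fin M) ℝ)
    (A : Matrix (Fin p) (Fin M) ℝ) (C : Matrix (Fin q) (Fin M) ℝ)
    (e : Fin p → ℝ) (d : Fin q → ℝ) (δ : ℝ)
    (lam : Fin p → ℝ) (mu : Fin q → ℝ) : ℝ :=
  -(1/2) * ((Aᵀ *ᵥ lam + Cᵀ *ᵥ mu) ⬝ᵥ H⁻¹ *ᵥ (Aᵀ *ᵥ lam + Cᵀ *ᵥ mu))
    - lam ⬝ᵥ e - (1 - δ) * (mu ⬝ᵥ d)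

open Filter Topology

theorem nonneg_of_forall_add_mul_nonneg {s r : ℝ} (h : ∀ t : ℝ, 0 < t → t ≤ 1 → 0 ≤ s + t * r) :
    0 ≤ s := by
  have hlim : Tendsto (fun t : ℝ => s + t * r) (𝓝[>] 0) (𝓝 s) := by
    refine ((Continuous.tendsto' ?_ 0 s ?_)).mono_left nhdsWithin_le_nhds
    · fun_prop
    · simp
  refine ge_of_tendsto hlim ?_
  filter_upwards [Ioo_mem_nhdsGT one_pos] with t ht using h t ht.1 ht.2.le

namespace Matrix

variable {n R : Type*} [Fintype n]

theorem IsSymm.dotProduct_mulVec_comm [CommSemiring R] {H : Matrix n n R} (hH : H.IsSymm)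
    (x y : n → R) : x ⬝ᵥ H *ᵥ y = y ⬝ᵥ H *ᵥ x := by
  rw [dotProduct_mulVec, ← mulVec_transpose, hH.eq, dotProduct_comm]

theorem IsSymm.add_dotProduct_mulVec_add [CommRing R] {H : Matrix n n R} (hH : H.IsSymm)
    (x w : n → R) :
    (x + w) ⬝ᵥ H *ᵥ (x + w) = x ⬝ᵥ H *ᵥ x + 2 * (x ⬝ᵥ H *ᵥ w) + w ⬝ᵥ H *ᵥ w := by
  rw [mulVec_add, dotProduct_add, add_dotProduct, add_dotProduct, hH.dotProduct_mulVec_comm w x]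
  ring

theorem transpose_mulVec_add_dotProduct [CommSemiring R] {p q : Type*} [Fintype p] [Fintype q]
    (A : Matrix p n R) (C : Matrix q n R) (lam : p → R) (mu : q → R) (y : n → R) :
    (Aᵀ *ᵥ lam + Cᵀ *ᵥ mu) ⬝ᵥ y = lam ⬝ᵥ A *ᵥ y + mu ⬝ᵥ C *ᵥ y := by
  rw [add_dotProduct, mulVec_transpose, mulVec_transpose, dotProduct_mulVec, dotProduct_mulVec]

/-- Completing the square: `y ↦ ½yᵀHy + gᵀy` attains its minimum `-½gᵀH⁻¹g` at `y = -H⁻¹g`. -/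
theorem PosDef.neg_half_dotProduct_inv_mulVec_le [DecidableEq n] {H : Matrix n n ℝ}
    (hH : H.PosDef) (g y : n → ℝ) :
    -(1 / 2) * (g ⬝ᵥ H⁻¹ *ᵥ g) ≤ (1 / 2) * (y ⬝ᵥ H *ᵥ y) + g ⬝ᵥ y := by
  have hHw : H *ᵥ (H⁻¹ *ᵥ g) = g := by
    rw [mulVec_mulVec, mul_nonsing_inv H hH.det_pos.ne'.isUnit, one_mulVec]
  have hsq := hH.posSemidef.dotProduct_mulVec_nonneg (y + H⁻¹ *ᵥ g)
  simp only [star_trivial] at hsq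
  rw [(isHermitian_iff_isSymm.mp hH.isHermitian).add_dotProduct_mulVec_add, hHw,
    dotProduct_comm y g, dotProduct_comm (H⁻¹ *ᵥ g) g] at hsq
  linarith

/-- Along the segment `y + t • (z - y)` the increment of `xᵀHx` is
`2t·yᵀH(z - y) + t²·(z - y)ᵀH(z - y) ≥ 0`; divide by `t` and let `t → 0⁺`. -/
theorem IsSymm.dotProduct_mulVec_sub_nonneg_of_isMinOn
    {H : Matrix n n ℝ} (hH : H.IsSymm) {K : Set (n → ℝ)} (hK : Convex ℝ K) {y z : n → ℝ}
    (hy : y ∈ K) (hz : z ∈ K) (hmin : IsMinOn (fun x => x ⬝ᵥ H *ᵥ x) K y) :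
    0 ≤ y ⬝ᵥ H *ᵥ (z - y) := by
  suffices 0 ≤ 2 * (y ⬝ᵥ H *ᵥ (z - y)) by linarith
  refine nonneg_of_forall_add_mul_nonneg (r := (z - y) ⬝ᵥ H *ᵥ (z - y)) fun t ht ht1 => ?_
  have hle : y ⬝ᵥ H *ᵥ y ≤ (y + t • (z - y)) ⬝ᵥ H *ᵥ (y + t • (z - y)) :=
    hmin (hK.add_smul_sub_mem hy hz ⟨ht.le, ht1⟩)
  simp only [hH.add_dotProduct_mulVec_add, mulVec_smul, dotProduct_smul, smul_dotProduct,
    smul_eq_mul] at hle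
  refine (mul_nonneg_iff_of_pos_left ht).mp ?_
  linarith

end Matrix

section QuadraticProgram

variable {n p q : Type*} [Fintype n]

def feasibleSet (A : Matrix p n ℝ) (C : Matrix q n ℝ) (e : p → ℝ) (d : q → ℝ) : Set (n → ℝ) :=
  {y | A *ᵥ y = e ∧ C *ᵥ y ≤ d}

theorem convex_feasibleSet (A : Matrix p n ℝ) (C : Matrix q n ℝ) (e : p → ℝ) (d : q → ℝ) :
    Convex ℝ (feasibleSet A C e d) :=
  ((convex_singleton e).linear_preimage A.mulVecLin).inter
    ((convex_Iic d).linear_preimage C.mulVecLin)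

end QuadraticProgram

theorem dualFn_le_of_mem_feasibleSet {M p q : ℕ} {H : Matrix (Fin M) (Fin M) ℝ} (hH : H.PosDef)
    {A : Matrix (Fin p) (Fin M) ℝ} {C : Matrix (Fin q) (Fin M) ℝ} {e : Fin p → ℝ}
    {d : Fin q → ℝ} (δ : ℝ) (lam : Fin p → ℝ) {mu : Fin q → ℝ} (hmu : 0 ≤ mu) {y : Fin M → ℝ}
    (hy : y ∈ feasibleSet A C e d) :
    dualFn H A C e d δ lam mu ≤ (1 / 2) * (y ⬝ᵥ H *ᵥ y) + δ * (mu ⬝ᵥ d) := by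
  obtain ⟨hAy, hCy⟩ := hy
  have hsq := hH.neg_half_dotProduct_inv_mulVec_le (Aᵀ *ᵥ lam + Cᵀ *ᵥ mu) y
  have hslack : mu ⬝ᵥ C *ᵥ y ≤ mu ⬝ᵥ d := dotProduct_le_dotProduct_of_nonneg_left hCy hmu
  rw [transpose_mulVec_add_dotProduct A C lam mu y, hAy] at hsq
  unfold dualFn
  linarith

theorem near_optimal_variable_bound_general {M p q : ℕ}
    (H : Matrix (Fin M) (Fin M) ℝ) (hH : H.PosDef)
    (A : Matrix (Fin p) (Fin M) ℝ) (C : Matrix (Fin q) (Fin M) ℝ)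
    (e : Fin p → ℝ) (d : Fin q → ℝ) (δ : ℝ)
    (ε c : ℝ)
    (ystar : Fin M → ℝ)
    (hystar : A *ᵥ ystar = e ∧ C *ᵥ ystar ≤ d)
    (hmin : ∀ y : Fin M → ℝ, A *ᵥ y = e → C *ᵥ y ≤ d →
      (1/2) * (ystar ⬝ᵥ H *ᵥ ystar) ≤ (1/2) * (y ⬝ᵥ H *ᵥ y))
    (yhat : Fin M → ℝ) (hyhat : A *ᵥ yhat = e ∧ C *ᵥ yhat ≤ d)
    (lam : Fin p → ℝ) (mu : Fin q → ℝ) (hmu : 0 ≤ mu)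
    (hdual : dualFn H A C e d δ lam mu ≥ (1/2) * (yhat ⬝ᵥ H *ᵥ yhat) - ε * c) :
    (1/2) * ((yhat - ystar) ⬝ᵥ H *ᵥ (yhat - ystar)) ≤ ε * c + δ * (mu ⬝ᵥ d) := by
  have hsymm : H.IsSymm := isHermitian_iff_isSymm.mp hH.isHermitian
  have hopt : 0 ≤ ystar ⬝ᵥ H *ᵥ (yhat - ystar) :=
    hsymm.dotProduct_mulVec_sub_nonneg_of_isMinOn (convex_feasibleSet A C e d) hystar hyhat
      fun y hy => by simpa using hmin y hy.1 hy.2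
  have hweak := dualFn_le_of_mem_feasibleSet hH δ lam hmu hystar
  have hsplit := hsymm.add_dotProduct_mulVec_add ystar (yhat - ystar)
  rw [add_sub_cancel] at hsplit
  linarith

/-- Paper's Lemma 3: if `y*` minimizes `½yᵀHy` over the untightened feasible set
`K₀ = {y : 𝐀y = e, 𝐂y ≤ d}`, `ŷ ∈ K₀`, and the dual value satisfies
`D^δ(λ,μ) ≥ ½ŷᵀHŷ − ε·c` for some `μ ≥ 0`, then
`½(ŷ − y*)ᵀH(ŷ − y*) ≤ ε·c + δ·μᵀd`. -/
theorem near_optimal_variable_bound {M p q : ℕ}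
    (hM : 1 ≤ M) (hp : 1 ≤ p) (hq : 1 ≤ q)
    (H : Matrix (Fin M) (Fin M) ℝ) (hH : H.PosDef)
    (A : Matrix (Fin p) (Fin M) ℝ) (C : Matrix (Fin q) (Fin M) ℝ)
    (e : Fin p → ℝ) (d : Fin q → ℝ) (δ : ℝ)
    (ε c : ℝ) (hε : 0 ≤ ε) (hc : 0 ≤ c)
    (ystar : Fin M → ℝ)
    (hystar : A *ᵥ ystar = e ∧ C *ᵥ ystar ≤ d)
    (hmin : ∀ y : Fin M → ℝ, A *ᵥ y = e → C *ᵥ y ≤ d →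
      (1/2) * (ystar ⬝ᵥ H *ᵥ ystar) ≤ (1/2) * (y ⬝ᵥ H *ᵥ y))
    (yhat : Fin M → ℝ) (hyhat : A *ᵥ yhat = e ∧ C *ᵥ yhat ≤ d)
    (lam : Fin p → ℝ) (mu : Fin q → ℝ) (hmu : 0 ≤ mu)
    (hdual : dualFn H A C e d δ lam mu ≥ (1/2) * (yhat ⬝ᵥ H *ᵥ yhat) - ε * c) :
    (1/2) * ((yhat - ystar) ⬝ᵥ H *ᵥ (yhat - ystar)) ≤ ε * c + δ * (mu ⬝ᵥ d) :=
  near_optimal_variable_bound_general H hH A C e d δ ε c ystar hystar hmin yhat hyhat lam mu hmu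
    hdual
end

section
/- (Bound on dual variables under a Slater-type condition; extension of Nedić–Ozdaglar used in the proof of the paper's Theorem 1.) Suppose d ≥ 0, let δ̄ ∈ (0,1] and 0 ≤ δ ≤ δ̄/2, and suppose there exists ȳ ∈ ℝ^M with 𝐀ȳ = e and 𝐂ȳ ≤ (1−δ̄)d. Then for every λ ∈ ℝ^p and every μ ∈ ℝ^q with μ ≥ 0, D^δ(λ,μ) ≤ ½ȳᵀHȳ − (δ̄/2)·μᵀd; equivalently, μᵀd ≤ (2/δ̄)·(½ȳᵀHȳ − D^δ(λ,μ)). -/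
open Matrix

lemma Matrix.IsSymm.dotProduct_mulVec_comm_s5 {n α : Type*} [Fintype n] [CommSemiring α]
    {H : Matrix n n α} (hH : H.IsSymm) (u v : n → α) :
    u ⬝ᵥ H *ᵥ v = v ⬝ᵥ H *ᵥ u := by
  rw [← dotProduct_transpose_mulVec, hH.eq]

/-- `-½ zᵀH⁻¹z` is the minimum of `y ↦ ½yᵀHy + zᵀy`, attained at `y = -H⁻¹z`. -/
lemma Matrix.PosDef.neg_half_dotProduct_inv_mulVec_le_s5 {n : Type*} [Fintype n] [DecidableEq n]
    {H : Matrix n n ℝ} (hH : H.PosDef) (z y : n → ℝ) :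
    -(1 / 2) * (z ⬝ᵥ H⁻¹ *ᵥ z) ≤ (1 / 2) * (y ⬝ᵥ H *ᵥ y) + z ⬝ᵥ y := by
  set x := H⁻¹ *ᵥ z with hx
  have hHx : H *ᵥ x = z := by
    rw [hx, mulVec_mulVec, mul_nonsing_inv _ (isUnit_iff_isUnit_det H |>.mp hH.isUnit),
      one_mulVec]
  have hsymm : H.IsSymm := by simpa using hH.isHermitian
  have hnonneg : 0 ≤ (y + x) ⬝ᵥ H *ᵥ (y + x) := by
    simpa using hH.posSemidef.dotProduct_mulVec_nonneg (y + x)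
  have hexpand : (y + x) ⬝ᵥ H *ᵥ (y + x) = y ⬝ᵥ H *ᵥ y + 2 * (z ⬝ᵥ y) + z ⬝ᵥ x := by
    rw [mulVec_add, dotProduct_add, add_dotProduct, add_dotProduct,
      hsymm.dotProduct_mulVec_comm_s5 x y, hHx, dotProduct_comm y z, dotProduct_comm x z]
    ring
  linarith

section WeakDuality

variable {M p q : ℕ} {H : Matrix (Fin M) (Fin M) ℝ}
  (A : Matrix (Fin p) (Fin M) ℝ) (C : Matrix (Fin q) (Fin M) ℝ)
  (e : Fin p → ℝ) (d : Fin q → ℝ) (δ : ℝ)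

lemma dualFn_le_lagrangian (hH : H.PosDef) (lam : Fin p → ℝ) (mu : Fin q → ℝ)
    (y : Fin M → ℝ) :
    dualFn H A C e d δ lam mu ≤
      (1 / 2) * (y ⬝ᵥ H *ᵥ y) + lam ⬝ᵥ (A *ᵥ y - e) + mu ⬝ᵥ (C *ᵥ y - (1 - δ) • d) := by
  have hpair : (Aᵀ *ᵥ lam + Cᵀ *ᵥ mu) ⬝ᵥ y = lam ⬝ᵥ A *ᵥ y + mu ⬝ᵥ C *ᵥ y := by
    rw [add_dotProduct, dotProduct_comm _ y, dotProduct_comm _ y, dotProduct_transpose_mulVec,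
      dotProduct_transpose_mulVec]
  have hmin := hH.neg_half_dotProduct_inv_mulVec_le_s5 (Aᵀ *ᵥ lam + Cᵀ *ᵥ mu) y
  simp only [dualFn, dotProduct_sub, dotProduct_smul, smul_eq_mul]
  linarith

lemma dualFn_le_of_slater (hH : H.PosDef) (hd : 0 ≤ d) {δbar : ℝ} (hδ : δ ≤ δbar / 2)
    {ybar : Fin M → ℝ} (heq : A *ᵥ ybar = e) (hineq : C *ᵥ ybar ≤ (1 - δbar) • d)
    (lam : Fin p → ℝ) {mu : Fin q → ℝ} (hmu : 0 ≤ mu) :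
    dualFn H A C e d δ lam mu ≤ (1 / 2) * (ybar ⬝ᵥ H *ᵥ ybar) - (δbar / 2) * (mu ⬝ᵥ d) := by
  have hslack : mu ⬝ᵥ (C *ᵥ ybar - (1 - δ) • d) ≤ (δ - δbar) * (mu ⬝ᵥ d) := by
    have hle : C *ᵥ ybar - (1 - δ) • d ≤ (δ - δbar) • d := by
      rw [show (δ - δbar) • d = (1 - δbar) • d - (1 - δ) • d by module]
      exact sub_le_sub_right hineq _
    simpa [dotProduct_smul] using dotProduct_le_dotProduct_of_nonneg_left hle hmu
  have hgap : (δ - δbar / 2) * (mu ⬝ᵥ d) ≤ 0 :=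
    mul_nonpos_of_nonpos_of_nonneg (by linarith) (dotProduct_nonneg_of_nonneg hmu hd)
  have hL := dualFn_le_lagrangian A C e d δ hH lam mu ybar
  rw [heq, sub_self, dotProduct_zero] at hL
  linarith

end WeakDuality

theorem dual_variable_bound_slater_general {M p q : ℕ}
    (H : Matrix (Fin M) (Fin M) ℝ) (hH : H.PosDef)
    (A : Matrix (Fin p) (Fin M) ℝ) (C : Matrix (Fin q) (Fin M) ℝ)
    (e : Fin p → ℝ) (d : Fin q → ℝ) (hd : 0 ≤ d)
    (δbar δ : ℝ) (hδbar : 0 < δbar ∧ δbar ≤ 1) (hδ : δ ≤ δbar / 2)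
    (ybar : Fin M → ℝ) (heq : A *ᵥ ybar = e) (hineq : C *ᵥ ybar ≤ (1 - δbar) • d) :
    ∀ (lam : Fin p → ℝ) (mu : Fin q → ℝ), 0 ≤ mu →
      dualFn H A C e d δ lam mu ≤ (1/2) * (ybar ⬝ᵥ H *ᵥ ybar) - (δbar / 2) * (mu ⬝ᵥ d) ∧
      mu ⬝ᵥ d ≤ (2 / δbar) * ((1/2) * (ybar ⬝ᵥ H *ᵥ ybar) - dualFn H A C e d δ lam mu) := by
  intro lam mu hmu
  have hbound := dualFn_le_of_slater A C e d δ hH hd hδ heq hineq lam hmu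
  refine ⟨hbound, ?_⟩
  calc mu ⬝ᵥ d = (2 / δbar) * ((δbar / 2) * (mu ⬝ᵥ d)) := by field_simp [hδbar.1.ne']
    _ ≤ (2 / δbar) * ((1/2) * (ybar ⬝ᵥ H *ᵥ ybar) - dualFn H A C e d δ lam mu) := by
      gcongr
      · exact div_nonneg zero_le_two hδbar.1.le
      · linarith

/-- Bound on dual variables under a Slater-type condition: if `d ≥ 0`,
`δ̄ ∈ (0,1]`, `0 ≤ δ ≤ δ̄/2` and `ȳ` satisfies `𝐀ȳ = e` and `𝐂ȳ ≤ (1−δ̄)d`, then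
for all `λ` and all `μ ≥ 0`, `D^δ(λ,μ) ≤ ½ȳᵀHȳ − (δ̄/2)·μᵀd`; equivalently,
`μᵀd ≤ (2/δ̄)(½ȳᵀHȳ − D^δ(λ,μ))`. -/
theorem dual_variable_bound_slater {M p q : ℕ}
    (hM : 1 ≤ M) (hp : 1 ≤ p) (hq : 1 ≤ q)
    (H : Matrix (Fin M) (Fin M) ℝ) (hH : H.PosDef)
    (A : Matrix (Fin p) (Fin M) ℝ) (C : Matrix (Fin q) (Fin M) ℝ)
    (e : Fin p → ℝ) (d : Fin q → ℝ) (hd : 0 ≤ d)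
    (δbar δ : ℝ) (hδbar : 0 < δbar ∧ δbar ≤ 1) (hδ0 : 0 ≤ δ) (hδ : δ ≤ δbar / 2)
    (ybar : Fin M → ℝ) (heq : A *ᵥ ybar = e) (hineq : C *ᵥ ybar ≤ (1 - δbar) • d) :
    ∀ (lam : Fin p → ℝ) (mu : Fin q → ℝ), 0 ≤ mu →
      dualFn H A C e d δ lam mu ≤ (1/2) * (ybar ⬝ᵥ H *ᵥ ybar) - (δbar / 2) * (mu ⬝ᵥ d) ∧
      mu ⬝ᵥ d ≤ (2 / δbar) * ((1/2) * (ybar ⬝ᵥ H *ᵥ ybar) - dualFn H A C e d δ lam mu) :=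
  dual_variable_bound_slater_general H hH A C e d hd δbar δ hδbar hδ ybar heq hineq
end
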